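/- Let G = (V, E) be a connected multigraph, f a divisor on G, and M a positive integer with M > dist_rec_G(f) + max{0, max_{v ∈ V}(f(v) − d_G(v))}; let G' and f' be as in the apex construction. Then dist_rec_G(f) = dist_nonhalt_{G'}(f'). -/

import Mathlib

variable {V : Type*} [Fintype V] [DecidableEq V]

/-- The degree of vertex `v` in the multigraph with edge-multiplicity function `m`. -/
def mgDeg (m : V → V → ℕ) (v : V) : ℕ := ∑ u, m v u

/-- The divisor obtained from `f` by firing vertex `v`. -/
def mgFire (m : V → V → ℕ) (f : V → ℤ) (v : V) : V → ℤ :=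
  fun u => if u = v then f v - mgDeg m v else f u + m v u

/-- The divisor obtained from `f` by firing the vertices of `L` in order. -/
def mgPlay (m : V → V → ℕ) (f : V → ℤ) (L : List V) : V → ℤ :=
  L.foldl (mgFire m) f

/-- `L` is a legal game from `f`: each fired vertex is active when fired. -/
def mgLegal (m : V → V → ℕ) : (V → ℤ) → List V → Prop
  | _, [] => True
  | f, v :: L => ((mgDeg m v : ℤ) ≤ f v) ∧ mgLegal m (mgFire m f v) L

/-- A divisor is stable if no vertex is active. -/
def mgStable (m : V → V → ℕ) (f : V → ℤ) : Prop := ∀ v, f v < (mgDeg m v : ℤ)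

/-- A divisor is halting if some legal game from it ends at a stable divisor. -/
def mgHalting (m : V → V → ℕ) (f : V → ℤ) : Prop :=
  ∃ L : List V, mgLegal m f L ∧ mgStable m (mgPlay m f L)

/-- A divisor is recurrent if some non-empty legal game from it leads back to it. -/
def mgRecurrent (m : V → V → ℕ) (f : V → ℤ) : Prop :=
  ∃ L : List V, L ≠ [] ∧ mgLegal m f L ∧ mgPlay m f L = f

/-- A divisor is effective if it is nonnegative everywhere. -/
def mgEffective (f : V → ℤ) : Prop := ∀ v, 0 ≤ f v

/-- The degree of a divisor. -/
def mgDegDiv (f : V → ℤ) : ℤ := ∑ v, f v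

/-- Distance of a divisor from a recurrent state. -/
noncomputable def mgDistRec (m : V → V → ℕ) (f : V → ℤ) : ℕ :=
  sInf {n : ℕ | ∃ g : V → ℤ, mgEffective g ∧ mgDegDiv g = (n : ℤ) ∧ mgRecurrent m (f + g)}

/-- Distance of a divisor from a non-halting state. -/
noncomputable def mgDistNonhalt (m : V → V → ℕ) (f : V → ℤ) : ℕ :=
  sInf {n : ℕ | ∃ g : V → ℤ, mgEffective g ∧ mgDegDiv g = (n : ℤ) ∧ ¬ mgHalting m (f + g)}

/-- A multigraph is connected if any two vertices are joined by a path of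
positive-multiplicity edges. -/
def mgConnected (m : V → V → ℕ) : Prop :=
  ∀ u v : V, Relation.ReflTransGen (fun a b => 0 < m a b) u v

/-- `f` and `g` are linearly equivalent: `f` can be transformed to `g` by firings. -/
def mgLinEquiv (m : V → V → ℕ) (f g : V → ℤ) : Prop :=
  ∃ L : List V, mgPlay m f L = g

/-- A divisor is winnable if it is linearly equivalent to an effective divisor. -/
def mgWinnable (m : V → V → ℕ) (f : V → ℤ) : Prop :=
  ∃ g : V → ℤ, mgEffective g ∧ mgLinEquiv m f g

/-- The rank of a divisor. -/
noncomputable def mgRank (m : V → V → ℕ) (f : V → ℤ) : ℤ :=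
  ((sInf {n : ℕ | ∃ g : V → ℤ, mgEffective g ∧ mgDegDiv g = (n : ℤ) ∧
    ¬ mgWinnable m (f - g)} : ℕ) : ℤ) - 1

/-- Edge multiplicities of the apex construction: the edges of `G` (on the `some`
vertices) together with `M` parallel edges between the new vertex `none` and each
original vertex. -/
def apexM (m : V → V → ℕ) (M : ℕ) : Option V → Option V → ℕ
  | some u, some v => m u v
  | some _, none => M
  | none, some _ => M
  | none, none => 0

/-- The divisor `f\'` of the apex construction: `f\'(v) = f(v) + M` on original
vertices and `f\'(v_new) = 0`. -/
def apexF (f : V → ℤ) (M : ℕ) : Option V → ℤ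
  | some v => f v + M
  | none => 0

/-! On the apex graph an original vertex has `M` more chips and `M` more edges than in `G`, so
before the apex fires a vertex fires in `G'` exactly when it would in `G`, except that it cannot fire
a second time once `M` exceeds its surplus of chips. The apex needs `|V| M` chips, so it can fire
only after every original vertex has fired once; such a game is a legal game of `G` firing every
vertex once, which on a connected graph amounts to recurrence. Recurrent divisors are non-halting
because they admit arbitrarily long legal games, which by the least action principle a halting
divisor does not. -/

theorem List.notMem_of_nodup_append_cons {α : Type*} {A B : List α} {x : α}
    (h : (A ++ x :: B).Nodup) : x ∉ A ∧ x ∉ B := by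
  simpa using (List.nodup_middle.1 h).notMem

theorem List.exists_eq_append_cons_of_dedup_eq {α : Type*} [DecidableEq α] {L A B : List α}
    {x : α} (h : L.dedup = A ++ x :: B) : ∃ A₀ B₀, L = A₀ ++ x :: B₀ ∧ x ∉ B₀ ∧ B.Sublist B₀ := by
  induction L generalizing A with
  | nil => simp at h
  | cons y T ih =>
    by_cases hy : y ∈ T
    · rw [List.dedup_cons_of_mem hy] at h
      obtain ⟨A₀, B₀, rfl, hx, hB⟩ := ih h
      exact ⟨y :: A₀, B₀, rfl, hx, hB⟩
    rw [List.dedup_cons_of_notMem hy] at h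
    cases A with
    | nil =>
      obtain ⟨rfl, rfl⟩ := List.cons_eq_cons.1 h
      exact ⟨[], T, rfl, hy, List.dedup_sublist T⟩
    | cons a A =>
      obtain ⟨-, hT⟩ := List.cons_eq_cons.1 h
      obtain ⟨A₀, B₀, rfl, hx, hB⟩ := ih hT
      exact ⟨y :: A₀, B₀, rfl, hx, hB⟩

theorem List.exists_eq_map_some {α : Type*} {L : List (Option α)} (h : none ∉ L) :
    ∃ Q : List α, L = Q.map some := by
  induction L with
  | nil => exact ⟨[], rfl⟩
  | cons o T ih =>
    obtain ⟨Q, rfl⟩ := ih fun hT => h (List.mem_cons_of_mem o hT)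
    obtain ⟨v, rfl⟩ := Option.ne_none_iff_exists'.1 fun ho => h (ho ▸ List.mem_cons_self)
    exact ⟨v :: Q, rfl⟩

theorem List.mem_of_nodup_of_card_le_length {α : Type*} [Fintype α] [DecidableEq α]
    {L : List α} (hL : L.Nodup) (hcard : Fintype.card α ≤ L.length) (a : α) : a ∈ L := by
  have hcard' : L.toFinset.card = Fintype.card α :=
    le_antisymm (Finset.card_le_univ _) (List.toFinset_card_of_nodup hL ▸ hcard)
  rw [← List.mem_toFinset, Finset.eq_univ_of_card _ hcard']
  exact Finset.mem_univ a

section ChipFiring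

variable {m : V → V → ℕ} {f : V → ℤ}

theorem mgLegal_cons {v : V} {L : List V} :
    mgLegal m f (v :: L) ↔ (mgDeg m v : ℤ) ≤ f v ∧ mgLegal m (mgFire m f v) L :=
  Iff.rfl

theorem mgPlay_cons (v : V) (L : List V) : mgPlay m f (v :: L) = mgPlay m (mgFire m f v) L :=
  rfl

theorem mgPlay_append (L₁ L₂ : List V) :
    mgPlay m f (L₁ ++ L₂) = mgPlay m (mgPlay m f L₁) L₂ :=
  List.foldl_append

theorem mgLegal_append {L₁ L₂ : List V} :
    mgLegal m f (L₁ ++ L₂) ↔ mgLegal m f L₁ ∧ mgLegal m (mgPlay m f L₁) L₂ := by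
  induction L₁ generalizing f with
  | nil => exact ⟨fun h => ⟨trivial, h⟩, fun h => h.2⟩
  | cons v L ih => rw [List.cons_append, mgLegal_cons, mgLegal_cons, ih, mgPlay_cons, and_assoc]

theorem mgLegal_iff_forall_eq_append_cons {L : List V} :
    mgLegal m f L ↔ ∀ A x B, L = A ++ x :: B → (mgDeg m x : ℤ) ≤ mgPlay m f A x := by
  refine ⟨fun h A x B hL => (mgLegal_cons.1 (mgLegal_append.1 (hL ▸ h)).2).1, fun h => ?_⟩
  induction L generalizing f with
  | nil => trivial
  | cons y L ih =>
    exact ⟨h [] y L rfl, ih fun A x B hL => h (y :: A) x B (by rw [hL, List.cons_append])⟩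

theorem mgFire_apply_self (v : V) : mgFire m f v v = f v - mgDeg m v :=
  if_pos rfl

theorem mgFire_apply_of_ne {u v : V} (h : u ≠ v) : mgFire m f v u = f u + m v u :=
  if_neg h

theorem mgFire_add (c : V → ℤ) (v : V) : mgFire m (f + c) v = mgFire m f v + c := by
  funext u
  by_cases h : u = v
  · subst h; simp only [mgFire_apply_self, Pi.add_apply]; ring
  · simp only [mgFire_apply_of_ne h, Pi.add_apply]; ring

theorem mgFire_comm (v w : V) : mgFire m (mgFire m f v) w = mgFire m (mgFire m f w) v := by
  rcases eq_or_ne v w with rfl | hvw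
  · rfl
  funext u
  unfold mgFire
  split_ifs <;> subst_vars <;> simp_all <;> ring

theorem mgPlay_perm {L L' : List V} (h : L.Perm L') : mgPlay m f L = mgPlay m f L' :=
  h.foldl_eq' (fun _ _ _ _ _ => mgFire_comm _ _) f

theorem mgPlay_apply_of_notMem {x : V} {L : List V} (hx : x ∉ L) :
    mgPlay m f L x = f x + (L.map fun u => (m u x : ℤ)).sum := by
  induction L generalizing f with
  | nil => simp [mgPlay]
  | cons u L ih =>
    obtain ⟨hxu, hxL⟩ := not_or.1 (List.mem_cons.not.1 hx)
    rw [mgPlay_cons, ih hxL, mgFire_apply_of_ne hxu, List.map_cons, List.sum_cons]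
    ring

theorem le_mgPlay_apply_of_notMem {x : V} {L : List V} (hx : x ∉ L) : f x ≤ mgPlay m f L x := by
  rw [mgPlay_apply_of_notMem hx]
  exact le_add_of_nonneg_right (List.sum_nonneg (by simp))

theorem mgPlay_append_cons_apply_self {A B : List V} {x : V} (hA : x ∉ A) (hB : x ∉ B) :
    mgPlay m f (A ++ x :: B) x =
      f x + (A.map fun u => (m u x : ℤ)).sum + (B.map fun u => (m u x : ℤ)).sum - mgDeg m x := by
  rw [mgPlay_append, mgPlay_cons, mgPlay_apply_of_notMem hB, mgFire_apply_self,
    mgPlay_apply_of_notMem hA]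
  ring

theorem mgLegal_add_of_nonneg {c : V → ℤ} {L : List V} (hc : ∀ u ∈ L, 0 ≤ c u)
    (h : mgLegal m f L) : mgLegal m (f + c) L := by
  induction L generalizing f with
  | nil => trivial
  | cons v L ih =>
    obtain ⟨hv, hL⟩ := h
    refine ⟨by simpa using add_le_add hv (hc v List.mem_cons_self), ?_⟩
    rw [mgFire_add]
    exact ih (fun u hu => hc u (List.mem_cons_of_mem v hu)) hL

/-- Firing `w` first only gives chips to the vertices of `A`. -/
theorem mgLegal_cons_append {A B : List V} {w : V} (hw : (mgDeg m w : ℤ) ≤ f w) (hA : w ∉ A)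
    (h : mgLegal m f (A ++ w :: B)) : mgLegal m f (w :: (A ++ B)) := by
  obtain ⟨hAleg, -, hB⟩ := mgLegal_append.1 h
  refine ⟨hw, mgLegal_append.2 ⟨?_, ?_⟩⟩
  · rw [← add_sub_cancel f (mgFire m f w)]
    refine mgLegal_add_of_nonneg (fun u hu => ?_) hAleg
    rw [Pi.sub_apply, mgFire_apply_of_ne (ne_of_mem_of_not_mem hu hA)]
    simp
  · rwa [← mgPlay_cons, mgPlay_perm (List.perm_append_singleton w A).symm, mgPlay_append]

/-- The least action principle: an active vertex must fire in `L`, and can be moved to its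
front. -/
theorem length_le_of_mgStable {L L' : List V} (hL : mgLegal m f L)
    (hst : mgStable m (mgPlay m f L)) (hL' : mgLegal m f L') : L'.length ≤ L.length := by
  induction L' generalizing f L with
  | nil => exact Nat.zero_le _
  | cons w T ih =>
    obtain ⟨hw, hT⟩ := hL'
    have hwL : w ∈ L := by
      by_contra hwL
      exact (hst w).not_ge (hw.trans (le_mgPlay_apply_of_notMem hwL))
    obtain ⟨A, B, rfl, hA⟩ := List.eq_append_cons_of_mem hwL
    obtain ⟨-, hAB⟩ := mgLegal_cons_append hw hA hL
    have hend : mgPlay m (mgFire m f w) (A ++ B) = mgPlay m f (A ++ w :: B) := by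
      rw [← mgPlay_cons]
      exact mgPlay_perm List.perm_middle.symm
    have := ih hAB (hend ▸ hst) hT
    simp only [List.length_cons, List.length_append] at this ⊢
    omega

theorem not_mgHalting_iff : ¬ mgHalting m f ↔ ∀ n, ∃ L, mgLegal m f L ∧ n ≤ L.length := by
  refine ⟨fun h n => ?_, fun h ⟨L, hL, hst⟩ => ?_⟩
  · induction n with
    | zero => exact ⟨[], trivial, le_rfl⟩
    | succ n ih =>
      obtain ⟨L, hL, hn⟩ := ih
      obtain ⟨v, hv⟩ : ∃ v, (mgDeg m v : ℤ) ≤ mgPlay m f L v := by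
        simpa [mgStable] using fun hst => h ⟨L, hL, hst⟩
      refine ⟨L ++ [v], mgLegal_append.2 ⟨hL, hv, trivial⟩, ?_⟩
      simpa using hn
  · obtain ⟨L', hL', hlen⟩ := h (L.length + 1)
    have := length_le_of_mgStable hL hst hL'
    omega

theorem not_mgHalting_of_mgRecurrent (h : mgRecurrent m f) : ¬ mgHalting m f := by
  obtain ⟨C, hC, hleg, hcyc⟩ := h
  refine not_mgHalting_iff.2 fun n => ?_
  induction n with
  | zero => exact ⟨[], trivial, le_rfl⟩
  | succ n ih =>
    obtain ⟨L, hL, hn⟩ := ih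
    refine ⟨C ++ L, mgLegal_append.2 ⟨hleg, by rwa [hcyc]⟩, ?_⟩
    have := List.length_pos_of_ne_nil hC
    simp only [List.length_append]
    omega

end ChipFiring

section Enumeration

variable {m : V → V → ℕ} {f : V → ℤ}

theorem sum_map_le_mgDeg (hsymm : ∀ u v, m u v = m v u) {L : List V} (hL : L.Nodup) (x : V) :
    (L.map fun u => (m u x : ℤ)).sum ≤ mgDeg m x := by
  rw [← List.sum_toFinset _ hL, mgDeg, Nat.cast_sum]
  simp_rw [hsymm x]
  exact Finset.sum_le_univ_sum_of_nonneg fun _ => Nat.cast_nonneg _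

theorem sum_map_eq_mgDeg (hsymm : ∀ u v, m u v = m v u) {L : List V} (hL : L.Nodup)
    (hmem : ∀ v, v ∈ L) (x : V) : (L.map fun u => (m u x : ℤ)).sum = mgDeg m x := by
  rw [← List.sum_toFinset _ hL, Finset.eq_univ_of_forall fun v => List.mem_toFinset.2 (hmem v),
    mgDeg, Nat.cast_sum]
  simp_rw [hsymm x]

theorem sum_map_add_sum_map_eq_mgDeg (hsymm : ∀ u v, m u v = m v u) (hloop : ∀ v, m v v = 0)
    {A B : List V} {x : V} (hP : (A ++ x :: B).Nodup) (hmem : ∀ v, v ∈ A ++ x :: B) :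
    (A.map fun u => (m u x : ℤ)).sum + (B.map fun u => (m u x : ℤ)).sum = mgDeg m x := by
  simpa [hloop] using sum_map_eq_mgDeg hsymm hP hmem x

theorem mgPlay_eq_self_of_nodup (hsymm : ∀ u v, m u v = m v u) (hloop : ∀ v, m v v = 0)
    {P : List V} (hP : P.Nodup) (hmem : ∀ v, v ∈ P) : mgPlay m f P = f := by
  funext x
  obtain ⟨A, B, rfl⟩ := List.append_of_mem (hmem x)
  obtain ⟨hxA, hxB⟩ := List.notMem_of_nodup_append_cons hP
  rw [mgPlay_append_cons_apply_self hxA hxB]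
  linarith [sum_map_add_sum_map_eq_mgDeg hsymm hloop hP hmem]

theorem mgLegal_of_nodup (hsymm : ∀ u v, m u v = m v u) (hloop : ∀ v, m v v = 0)
    {P : List V} (hP : P.Nodup) (hmem : ∀ v, v ∈ P)
    (hf : ∀ A x B, P = A ++ x :: B → (B.map fun u => (m u x : ℤ)).sum ≤ f x) :
    mgLegal m f P := by
  refine mgLegal_iff_forall_eq_append_cons.2 fun A x B hAB => ?_
  subst hAB
  rw [mgPlay_apply_of_notMem (List.notMem_of_nodup_append_cons hP).1]
  linarith [sum_map_add_sum_map_eq_mgDeg hsymm hloop hP hmem, hf A x B rfl]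

theorem mgRecurrent_of_nodup [Nonempty V] (hsymm : ∀ u v, m u v = m v u)
    (hloop : ∀ v, m v v = 0) {P : List V} (hP : P.Nodup) (hmem : ∀ v, v ∈ P)
    (hleg : mgLegal m f P) : mgRecurrent m f :=
  ⟨P, List.ne_nil_of_mem (hmem (Classical.arbitrary V)), hleg,
    mgPlay_eq_self_of_nodup hsymm hloop hP hmem⟩

theorem mgRecurrent_of_forall_mgDeg_le [Nonempty V] (hsymm : ∀ u v, m u v = m v u)
    (hloop : ∀ v, m v v = 0) (hf : ∀ v, (mgDeg m v : ℤ) ≤ f v) : mgRecurrent m f := by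
  have hP := (Finset.univ : Finset V).nodup_toList
  have hmem : ∀ v, v ∈ (Finset.univ : Finset V).toList := by simp
  refine mgRecurrent_of_nodup hsymm hloop hP hmem (mgLegal_of_nodup hsymm hloop hP hmem ?_)
  rintro A x B hAB
  rw [hAB] at hP
  exact (sum_map_le_mgDeg hsymm (List.nodup_append.1 hP).2.1.of_cons x).trans (hf x)

theorem exists_mgEffective_add_mgRecurrent [Nonempty V] (hsymm : ∀ u v, m u v = m v u)
    (hloop : ∀ v, m v v = 0) (f : V → ℤ) : ∃ g, mgEffective g ∧ mgRecurrent m (f + g) := by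
  refine ⟨fun v => max ((mgDeg m v : ℤ) - f v) 0, fun v => le_max_right _ _,
    mgRecurrent_of_forall_mgDeg_le hsymm hloop fun v => ?_⟩
  simp only [Pi.add_apply]
  linarith [le_max_left ((mgDeg m v : ℤ) - f v) 0]

/-- After its last firing in a game returning to `f`, a vertex `x` only collects chips, starting
from a nonnegative amount. -/
theorem sum_map_le_of_mgPlay_eq_self {A B : List V} {x : V} (hleg : mgLegal m f (A ++ x :: B))
    (hcyc : mgPlay m f (A ++ x :: B) = f) (hx : x ∉ B) :
    (B.map fun u => (m u x : ℤ)).sum ≤ f x := by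
  have hact := (mgLegal_cons.1 (mgLegal_append.1 hleg).2).1
  have hfx := congrFun hcyc x
  rw [mgPlay_append, mgPlay_cons, mgPlay_apply_of_notMem hx, mgFire_apply_self] at hfx
  linarith

theorem mem_of_mgPlay_eq_self (hconn : mgConnected m) {L : List V} (hL : L ≠ [])
    (hcyc : mgPlay m f L = f) (v : V) : v ∈ L := by
  obtain ⟨x, hx⟩ := List.exists_mem_of_ne_nil L hL
  induction hconn x v with
  | refl => exact hx
  | @tail b c _ hbc hb =>
    by_contra hc
    have hfc := congrFun hcyc c
    rw [mgPlay_apply_of_notMem hc] at hfc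
    have := List.single_le_sum (by simp) _ (List.mem_map_of_mem (f := fun u => (m u c : ℤ)) hb)
    omega

/-- `List.dedup` keeps last occurrences, so it lists the vertices by their last firing. -/
theorem exists_nodup_mgLegal_of_mgRecurrent (hsymm : ∀ u v, m u v = m v u)
    (hloop : ∀ v, m v v = 0) (hconn : mgConnected m) (h : mgRecurrent m f) :
    ∃ P : List V, P.Nodup ∧ (∀ v, v ∈ P) ∧ mgLegal m f P := by
  obtain ⟨L, hL, hleg, hcyc⟩ := h
  have hmem v : v ∈ L.dedup := List.mem_dedup.2 (mem_of_mgPlay_eq_self hconn hL hcyc v)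
  refine ⟨L.dedup, L.nodup_dedup, hmem, mgLegal_of_nodup hsymm hloop L.nodup_dedup hmem ?_⟩
  intro A x B hAB
  obtain ⟨A₀, B₀, rfl, hx, hB⟩ := List.exists_eq_append_cons_of_dedup_eq hAB
  exact ((hB.map _).sum_le_sum (by simp)).trans (sum_map_le_of_mgPlay_eq_self hleg hcyc hx)

/-- A second firing of `x` needs `2 d(x)` chips, while the other vertices of a repetition-free game
avoiding `z` can bring at most `d(x) - m z x`. -/
theorem nodup_of_mgLegal (hsymm : ∀ u v, m u v = m v u) {z : V}
    (hf : ∀ x, x ≠ z → f x < mgDeg m x + m z x) {L : List V} (hL : mgLegal m f L)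
    (hz : z ∉ L) : L.Nodup := by
  induction L using List.reverseRecOn with
  | nil => exact List.nodup_nil
  | append_singleton Q x ih =>
    obtain ⟨hQ, hx, -⟩ := mgLegal_append.1 hL
    have hzQ : z ∉ Q := fun h => hz (List.mem_append_left _ h)
    have hQnd := ih hQ hzQ
    rw [← List.concat_eq_append]
    refine hQnd.concat fun hxQ => ?_
    have hfx := hf x (ne_of_mem_of_not_mem hxQ hzQ)
    obtain ⟨A, B, rfl⟩ := List.append_of_mem hxQ
    obtain ⟨hxA, hxB⟩ := List.notMem_of_nodup_append_cons hQnd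
    have hsum := sum_map_le_mgDeg hsymm (List.nodup_cons.2 ⟨hzQ, hQnd⟩) x
    simp only [List.map_cons, List.map_append, List.sum_cons, List.sum_append] at hsum
    rw [mgPlay_append_cons_apply_self hxA hxB] at hx
    have : (0 : ℤ) ≤ m x x := Nat.cast_nonneg _
    linarith

end Enumeration

theorem apexM_symm {α : Type*} {m : α → α → ℕ} {M : ℕ} (hsymm : ∀ u v, m u v = m v u)
    (a b : Option α) : apexM m M a b = apexM m M b a := by
  cases a <;> cases b <;> simp [apexM, hsymm]

theorem apexM_self {α : Type*} {m : α → α → ℕ} {M : ℕ} (hloop : ∀ v, m v v = 0) (a : Option α) :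
    apexM m M a a = 0 := by
  cases a <;> simp [apexM, hloop]

theorem apexF_add {α : Type*} (f g : α → ℤ) (M : ℕ) :
    apexF f M + (fun o => o.elim 0 g) = apexF (f + g) M := by
  funext o
  cases o <;> simp [apexF]
  ring

theorem mgDeg_apexM_some {α : Type*} [Fintype α] {m : α → α → ℕ} {M : ℕ} (v : α) :
    mgDeg (apexM m M) (some v) = mgDeg m v + M := by
  simp [mgDeg, Fintype.sum_option, apexM, add_comm]

theorem mgDeg_apexM_none {α : Type*} [Fintype α] {m : α → α → ℕ} {M : ℕ} :
    mgDeg (apexM m M) (none : Option α) = Fintype.card α * M := by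
  simp [mgDeg, Fintype.sum_option, apexM]

section Apex

variable {m : V → V → ℕ} {M : ℕ}

theorem mgPlay_apexM_map_some_none (H : Option V → ℤ) (Q : List V) :
    mgPlay (apexM m M) H (Q.map some) none = H none + Q.length * M := by
  rw [mgPlay_apply_of_notMem (by simp)]
  simp [apexM, Function.comp_def]

/-- Each vertex still to fire carries the `M` chips that pay for its edge to the apex. -/
theorem mgLegal_apexM_map_some_iff {F : V → ℤ} {H : Option V → ℤ} {Q : List V} (hQ : Q.Nodup)
    (hH : ∀ v ∈ Q, H (some v) = F v + M) :
    mgLegal (apexM m M) H (Q.map some) ↔ mgLegal m F Q := by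
  induction Q generalizing F H with
  | nil => exact Iff.rfl
  | cons q T ih =>
    obtain ⟨hqT, hT⟩ := List.nodup_cons.1 hQ
    rw [List.map_cons, mgLegal_cons, mgLegal_cons, mgDeg_apexM_some, hH q List.mem_cons_self]
    refine and_congr (by push_cast; exact add_le_add_iff_right _) (ih hT fun v hv => ?_)
    have hvq : v ≠ q := ne_of_mem_of_not_mem hv hqT
    rw [mgFire_apply_of_ne (Option.some_injective _ |>.ne hvq), mgFire_apply_of_ne hvq,
      hH v (List.mem_cons_of_mem q hv)]
    simp only [apexM]
    ring

theorem not_mgHalting_apex_of_mgRecurrent (hsymm : ∀ u v, m u v = m v u)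
    (hloop : ∀ v, m v v = 0) (hconn : mgConnected m) {F : V → ℤ} (h : mgRecurrent m F) :
    ¬ mgHalting (apexM m M) (apexF F M) := by
  obtain ⟨P, hP, hmem, hleg⟩ := exists_nodup_mgLegal_of_mgRecurrent hsymm hloop hconn h
  have hlen : P.length = Fintype.card V :=
    le_antisymm hP.length_le_card (by
      rw [← List.toFinset_card_of_nodup hP]
      exact Finset.card_le_card fun v _ => List.mem_toFinset.2 (hmem v))
  refine not_mgHalting_of_mgRecurrent (mgRecurrent_of_nodup (P := P.map some ++ [none])
    (apexM_symm hsymm) (apexM_self hloop) ?_ ?_ ?_)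
  · exact List.nodup_append.2 ⟨hP.map (Option.some_injective V), List.nodup_singleton _, by simp⟩
  · rintro (_ | v) <;> simp [hmem]
  · refine mgLegal_append.2 ⟨(mgLegal_apexM_map_some_iff hP fun v _ => rfl).2 hleg, ?_, trivial⟩
    rw [mgPlay_apexM_map_some_none, mgDeg_apexM_none, hlen]
    simp [apexF]

theorem exists_mgEffective_not_mgHalting_apex (hsymm : ∀ u v, m u v = m v u)
    (hloop : ∀ v, m v v = 0) (hconn : mgConnected m) {f g : V → ℤ} (hg : mgEffective g)
    (h : mgRecurrent m (f + g)) : ∃ g₀ : Option V → ℤ, mgEffective g₀ ∧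
      mgDegDiv g₀ = mgDegDiv g ∧ ¬ mgHalting (apexM m M) (apexF f M + g₀) := by
  refine ⟨fun o => o.elim 0 g, ?_, by simp [mgDegDiv, Fintype.sum_option], ?_⟩
  · rintro (_ | v)
    exacts [le_rfl, hg v]
  · rw [apexF_add]
    exact not_mgHalting_apex_of_mgRecurrent hsymm hloop hconn h

theorem mgRecurrent_of_not_mgHalting_apex [Nonempty V] (hsymm : ∀ u v, m u v = m v u)
    (hloop : ∀ v, m v v = 0) {F : V → ℤ} {H : Option V → ℤ}
    (hH : ∀ v, H (some v) = F v + M) (hnone : H none < M) (hF : ∀ v, F v < mgDeg m v + M)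
    (h : ¬ mgHalting (apexM m M) H) : mgRecurrent m F := by
  have hnodup {L : List (Option V)} (hL : mgLegal (apexM m M) H L) (hz : none ∉ L) : L.Nodup := by
    refine nodup_of_mgLegal (apexM_symm hsymm) (fun x hx => ?_) hL hz
    obtain ⟨v, rfl⟩ := Option.ne_none_iff_exists'.1 hx
    rw [hH, mgDeg_apexM_some]
    simp only [apexM]
    push_cast
    linarith [hF v]
  obtain ⟨L, hL, hlen⟩ := not_mgHalting_iff.1 h (Fintype.card V + 1)
  have hnoneL : none ∈ L := by
    by_contra hz
    have := (List.nodup_cons.2 ⟨hz, hnodup hL hz⟩).length_le_card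
    simp only [List.length_cons, Fintype.card_option] at this
    omega
  obtain ⟨A, B, rfl, hA⟩ := List.eq_append_cons_of_mem hnoneL
  obtain ⟨Q, rfl⟩ := List.exists_eq_map_some hA
  obtain ⟨hQleg, hact, -⟩ := mgLegal_append.1 hL
  have hQ : Q.Nodup := (hnodup hQleg hA).of_map some
  rw [mgPlay_apexM_map_some_none, mgDeg_apexM_none] at hact
  have hcard : Fintype.card V ≤ Q.length := by
    by_contra hlt
    have : ((Q.length : ℤ) + 1) * M ≤ Fintype.card V * M := by gcongr; omega
    push_cast at hact
    nlinarith
  exact mgRecurrent_of_nodup hsymm hloop hQ (List.mem_of_nodup_of_card_le_length hQ hcard)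
    ((mgLegal_apexM_map_some_iff hQ fun v _ => hH v).1 hQleg)

theorem mgRecurrent_add_of_not_mgHalting_apex [Nonempty V] (hsymm : ∀ u v, m u v = m v u)
    (hloop : ∀ v, m v v = 0) {f : V → ℤ} {g : Option V → ℤ} (hg : mgEffective g)
    (hM : mgDegDiv g +
        max 0 (Finset.univ.sup' Finset.univ_nonempty (fun v => f v - (mgDeg m v : ℤ))) < M)
    (h : ¬ mgHalting (apexM m M) (apexF f M + g)) : mgRecurrent m (f + fun v => g (some v)) := by
  have hdeg : mgDegDiv g = g none + ∑ v, g (some v) := Fintype.sum_option g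
  have hsum : 0 ≤ ∑ v, g (some v) := Finset.sum_nonneg fun v _ => hg (some v)
  have hmax := le_max_left 0 (Finset.univ.sup' Finset.univ_nonempty
    (fun v => f v - (mgDeg m v : ℤ)))
  refine mgRecurrent_of_not_mgHalting_apex hsymm hloop (fun v => ?_) ?_ (fun v => ?_) h
  · simp only [Pi.add_apply, apexF]
    ring
  · simp only [Pi.add_apply, apexF, zero_add]
    linarith
  · have hle : g (some v) ≤ ∑ v, g (some v) :=
      Finset.single_le_sum (fun u _ => hg (some u)) (Finset.mem_univ v)
    have hfv : f v - mgDeg m v ≤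
        max 0 (Finset.univ.sup' Finset.univ_nonempty (fun v => f v - (mgDeg m v : ℤ))) :=
      (Finset.le_sup' (fun v => f v - (mgDeg m v : ℤ)) (Finset.mem_univ v)).trans
        (le_max_right _ _)
    simp only [Pi.add_apply]
    linarith [hg none]

end Apex

theorem sInf_mgDegDiv_le {α : Type*} [Fintype α] {P : (α → ℤ) → Prop} {g : α → ℤ}
    (hg : mgEffective g) (hP : P g) :
    ((sInf {n : ℕ | ∃ g, mgEffective g ∧ mgDegDiv g = n ∧ P g} : ℕ) : ℤ) ≤ mgDegDiv g := by
  have hdeg : 0 ≤ mgDegDiv g := Finset.sum_nonneg fun v _ => hg v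
  have := Nat.sInf_le (s := {n : ℕ | ∃ g, mgEffective g ∧ mgDegDiv g = n ∧ P g})
    ⟨g, hg, (Int.toNat_of_nonneg hdeg).symm, hP⟩
  omega

theorem exists_mgDegDiv_eq_sInf {α : Type*} [Fintype α] {P : (α → ℤ) → Prop}
    (h : ∃ g, mgEffective g ∧ P g) :
    ∃ g, mgEffective g ∧
      mgDegDiv g = (sInf {n : ℕ | ∃ g, mgEffective g ∧ mgDegDiv g = n ∧ P g} : ℕ) ∧ P g := by
  obtain ⟨g, hg, hP⟩ := h
  exact Nat.sInf_mem (s := {n : ℕ | ∃ g, mgEffective g ∧ mgDegDiv g = n ∧ P g})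
    ⟨_, g, hg, (Int.toNat_of_nonneg (Finset.sum_nonneg fun v _ => hg v)).symm, hP⟩

theorem stmt16_general [Nonempty V] (m : V → V → ℕ) (hsymm : ∀ u v, m u v = m v u)
    (hloop : ∀ v, m v v = 0) (hconn : mgConnected m) (f : V → ℤ) (M : ℕ)
    (hM : (mgDistRec m f : ℤ) +
        max 0 (Finset.univ.sup' Finset.univ_nonempty (fun v => f v - (mgDeg m v : ℤ)))
      < (M : ℤ)) :
    mgDistRec m f = mgDistNonhalt (apexM m M) (apexF f M) := by
  obtain ⟨g, hg, hgdeg, hrec⟩ : ∃ g, mgEffective g ∧ mgDegDiv g = mgDistRec m f ∧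
      mgRecurrent m (f + g) :=
    exists_mgDegDiv_eq_sInf (exists_mgEffective_add_mgRecurrent hsymm hloop f)
  obtain ⟨g₀, hg₀, hg₀deg, hnh⟩ :=
    exists_mgEffective_not_mgHalting_apex (M := M) hsymm hloop hconn hg hrec
  have hND : (mgDistNonhalt (apexM m M) (apexF f M) : ℤ) ≤ mgDegDiv g₀ :=
    sInf_mgDegDiv_le (P := fun g' => ¬ mgHalting (apexM m M) (apexF f M + g')) hg₀ hnh
  obtain ⟨g', hg', hg'deg, hnh'⟩ : ∃ g', mgEffective g' ∧
      mgDegDiv g' = mgDistNonhalt (apexM m M) (apexF f M) ∧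
      ¬ mgHalting (apexM m M) (apexF f M + g') :=
    exists_mgDegDiv_eq_sInf ⟨g₀, hg₀, hnh⟩
  have hrec' := mgRecurrent_add_of_not_mgHalting_apex hsymm hloop hg' (by omega) hnh'
  have hDN : (mgDistRec m f : ℤ) ≤ mgDegDiv fun v => g' (some v) :=
    sInf_mgDegDiv_le (P := fun g => mgRecurrent m (f + g)) (fun v => hg' (some v)) hrec'
  have hsplit : mgDegDiv g' = g' none + mgDegDiv fun v => g' (some v) := Fintype.sum_option g'
  have := hg' none
  omega

/-- `dist_rec_G(f) = dist_nonhalt_{G'}(f')` for the apex construction. -/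
theorem stmt16 [Nonempty V] (m : V → V → ℕ) (hsymm : ∀ u v, m u v = m v u)
    (hloop : ∀ v, m v v = 0) (hconn : mgConnected m) (f : V → ℤ) (M : ℕ)
    (hMpos : 0 < M)
    (hM : (mgDistRec m f : ℤ) +
        max 0 (Finset.univ.sup' Finset.univ_nonempty (fun v => f v - (mgDeg m v : ℤ)))
      < (M : ℤ)) :
    mgDistRec m f = mgDistNonhalt (apexM m M) (apexF f M) :=
  stmt16_general m hsymm hloop hconn f M hM
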